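/- arXiv:2412.19822 — 2 statements merged into one kernel-verified Lean document; each statement's English description precedes it below -/
import Mathlib

section
/- Let N be an odd positive integer and let λ_0, …, λ_N be pairwise distinct positive real numbers. Assume Φ_N^{(j)}(x) ≥ 0 for every real x > 0 and every integer j ≥ 0. Then for every x > 0, every nonnegative integer k with 2k+1 ≤ N, and every vector p = (p_0, …, p_k) ∈ ℝ^{k+1}, one has Σ_{i=0}^{k} Σ_{j=0}^{k} p_i p_j b_{i+j+1}(x) ≥ 0. -/
/-!
Taylor's formula with integral remainder at `0`, combined with the normalisation of `Φ` at `0`,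
gives `b n x = x ^ n + ∫₀ˣ (x - t) ^ n Φ⁽ᴺ⁺¹⁾(t) dt` for `n ≤ N`. Hence the form equals
`x (∑ pᵢ xⁱ)² + ∫₀ˣ (x - t) (∑ pᵢ (x - t)ⁱ)² Φ⁽ᴺ⁺¹⁾(t) dt`, and both terms are nonnegative
because `Φ⁽ᴺ⁺¹⁾ ≥ 0` on `(0, ∞)`.
-/

open Set Finset Nat MeasureTheory

theorem contDiff_of_mem_span_exp {ι : Type*} {l : ι → ℝ} {Φ : ℝ → ℝ}
    (hΦ : Φ ∈ Submodule.span ℝ (Set.range fun j : ι => fun x : ℝ => Real.exp (l j * x)))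
    {n : WithTop ℕ∞} : ContDiff ℝ n Φ := by
  induction hΦ using Submodule.span_induction with
  | mem f hf =>
    obtain ⟨j, rfl⟩ := hf
    fun_prop
  | zero => exact contDiff_const
  | add f g _ _ hf hg => exact hf.add hg
  | smul c f _ hf => exact hf.const_smul c

theorem iteratedDeriv_iteratedDeriv {𝕜 F : Type*} [NontriviallyNormedField 𝕜]
    [NormedAddCommGroup F] [NormedSpace 𝕜 F] (m k : ℕ) (f : 𝕜 → F) :
    iteratedDeriv m (iteratedDeriv k f) = iteratedDeriv (m + k) f := by
  simp only [iteratedDeriv_eq_iterate, Function.iterate_add_apply]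

theorem taylor_integral_remainder_of_contDiff {F : Type*} [NormedAddCommGroup F]
    [NormedSpace ℝ F] [CompleteSpace F] {f : ℝ → F} {n : ℕ} (hf : ContDiff ℝ (n + 1 : ℕ) f)
    (x₀ x : ℝ) :
    f x = ∑ k ∈ range (n + 1), ((k ! : ℝ)⁻¹ * (x - x₀) ^ k) • iteratedDeriv k f x₀ +
      ∫ t in x₀..x, ((x - t) ^ n / n !) • iteratedDeriv (n + 1) f t := by
  rcases eq_or_ne x₀ x with rfl | hne
  · simp [Finset.sum_range_succ']
  have hwithin : ∀ k ≤ n + 1, ∀ t ∈ uIcc x₀ x,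
      iteratedDerivWithin k f (uIcc x₀ x) t = iteratedDeriv k f t := fun k hk t ht =>
    iteratedDerivWithin_eq_iteratedDeriv (uniqueDiffOn_uIcc hne)
      (hf.of_le (by exact_mod_cast hk)).contDiffAt ht
  have h := taylor_integral_remainder (x₀ := x₀) (x := x) hf.contDiffOn
  rw [taylor_within_apply, sub_eq_iff_eq_add'] at h
  rw [h]
  congr 1
  · refine Finset.sum_congr rfl fun k hk => ?_
    rw [hwithin k (by simp at hk; omega) x₀ left_mem_uIcc]
  · exact intervalIntegral.integral_congr fun t ht => by simp only [hwithin (n + 1) le_rfl t ht]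

theorem factorial_mul_iteratedDeriv_sub_eq {f : ℝ → ℝ} {N n : ℕ} (hf : ContDiff ℝ (N + 1 : ℕ) f)
    (hf0 : ∀ j < N, iteratedDeriv j f 0 = 0) (hfN : iteratedDeriv N f 0 = 1) (hn : n ≤ N)
    (x : ℝ) :
    n ! * iteratedDeriv (N - n) f x =
      x ^ n + ∫ t in 0..x, (x - t) ^ n * iteratedDeriv (N + 1) f t := by
  have hg : ContDiff ℝ (n + 1 : ℕ) (iteratedDeriv (N - n) f) := by
    rw [iteratedDeriv_eq_iterate]
    exact ContDiff.iterate_deriv' (n + 1) (N - n) (by rwa [show n + 1 + (N - n) = N + 1 by omega])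
  have htaylor_poly : ∑ k ∈ range (n + 1), ((k ! : ℝ)⁻¹ * (x - 0) ^ k) •
      iteratedDeriv k (iteratedDeriv (N - n) f) 0 = (n ! : ℝ)⁻¹ * x ^ n := by
    rw [Finset.sum_range_succ, Finset.sum_eq_zero fun k hk => ?_]
    · rw [iteratedDeriv_iteratedDeriv, show n + (N - n) = N by omega, hfN]
      simp
    · rw [iteratedDeriv_iteratedDeriv, hf0 _ (by simp at hk; omega), smul_zero]
  rw [taylor_integral_remainder_of_contDiff hg 0 x, htaylor_poly, iteratedDeriv_iteratedDeriv,
    show n + 1 + (N - n) = N + 1 by omega, mul_add, ← intervalIntegral.integral_const_mul]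
  simp only [smul_eq_mul]
  congr 1
  · field_simp
  · exact intervalIntegral.integral_congr fun t _ => by field_simp

theorem sum_sum_mul_mul_pow_add_add_one {R ι : Type*} [CommSemiring R] [Fintype ι]
    (p : ι → R) (e : ι → ℕ) (y : R) :
    ∑ i, ∑ j, p i * p j * y ^ (e i + e j + 1) = y * (∑ i, p i * y ^ e i) ^ 2 := by
  rw [sq, Finset.sum_mul_sum, Finset.mul_sum]
  refine Finset.sum_congr rfl fun i _ => ?_
  rw [Finset.mul_sum]
  exact Finset.sum_congr rfl fun j _ => by ring

theorem quadratic_form_pow_add_integral_nonneg {ι : Type*} [Fintype ι] {g : ℝ → ℝ} {x : ℝ}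
    (hx : 0 ≤ x) (hg : IntervalIntegrable g volume 0 x) (hg0 : ∀ t ∈ Ioo 0 x, 0 ≤ g t)
    (p : ι → ℝ) (e : ι → ℕ) :
    0 ≤ ∑ i, ∑ j, p i * p j *
      (x ^ (e i + e j + 1) + ∫ t in 0..x, (x - t) ^ (e i + e j + 1) * g t) := by
  have hremainder : ∑ i, ∑ j, p i * p j * ∫ t in 0..x, (x - t) ^ (e i + e j + 1) * g t =
      ∫ t in 0..x, (x - t) * (∑ i, p i * (x - t) ^ e i) ^ 2 * g t := calc
    _ = ∑ ij : ι × ι, ∫ t in 0..x,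
          p ij.1 * p ij.2 * (x - t) ^ (e ij.1 + e ij.2 + 1) * g t := by
      simp only [Fintype.sum_prod_type, mul_assoc, intervalIntegral.integral_const_mul]
    _ = ∫ t in 0..x, ∑ ij : ι × ι, p ij.1 * p ij.2 * (x - t) ^ (e ij.1 + e ij.2 + 1) * g t :=
      (intervalIntegral.integral_finsetSum fun _ _ => hg.continuousOn_mul (by fun_prop)).symm
    _ = _ := intervalIntegral.integral_congr fun t _ => by
      simp only [Fintype.sum_prod_type, ← Finset.sum_mul, sum_sum_mul_mul_pow_add_add_one]
  simp only [mul_add, Finset.sum_add_distrib, sum_sum_mul_mul_pow_add_add_one, hremainder]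
  refine add_nonneg (mul_nonneg hx (sq_nonneg _))
    (intervalIntegral.integral_nonneg_of_ae_restrict hx ?_)
  filter_upwards [ae_restrict_mem measurableSet_Icc, ae_restrict_of_ae (volume.ae_ne 0),
    ae_restrict_of_ae (volume.ae_ne x)] with t ⟨ht0, htx⟩ ht0' htx'
  have : 0 ≤ g t := hg0 t ⟨lt_of_le_of_ne ht0 (Ne.symm ht0'), lt_of_le_of_ne htx htx'⟩
  have : 0 ≤ x - t := by linarith
  positivity

theorem hankel_shifted_quadratic_form_nonneg_general
    (N : ℕ)
    (l : Fin (N + 1) → ℝ)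
    (Φ : ℝ → ℝ)
    (hΦmem : Φ ∈ Submodule.span ℝ
        (Set.range (fun j : Fin (N + 1) => fun x : ℝ => Real.exp (l j * x))))
    (hΦ0 : ∀ j < N, iteratedDeriv j Φ 0 = 0)
    (hΦN : iteratedDeriv N Φ 0 = 1)
    (hΦnonneg : ∀ x : ℝ, 0 < x → ∀ j : ℕ, 0 ≤ iteratedDeriv j Φ x)
    (b : ℕ → ℝ → ℝ)
    (hb : ∀ j ≤ N, b j = fun x => (Nat.factorial j : ℝ) * iteratedDeriv (N - j) Φ x) :
    ∀ x : ℝ, 0 < x → ∀ k : ℕ, 2 * k + 1 ≤ N → ∀ p : Fin (k + 1) → ℝ,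
      0 ≤ ∑ i : Fin (k + 1), ∑ j : Fin (k + 1), p i * p j * b ((i : ℕ) + (j : ℕ) + 1) x := by
  intro x hx k hk p
  have hΦsmooth : ∀ {n : WithTop ℕ∞}, ContDiff ℝ n Φ := contDiff_of_mem_span_exp hΦmem
  have hb_integral : ∀ i j : Fin (k + 1), b (i + j + 1) x =
      x ^ (i + j + 1 : ℕ) + ∫ t in 0..x, (x - t) ^ (i + j + 1 : ℕ) * iteratedDeriv (N + 1) Φ t := by
    intro i j
    rw [hb _ (by omega)]
    exact factorial_mul_iteratedDeriv_sub_eq hΦsmooth hΦ0 hΦN (by omega) x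
  simp only [hb_integral]
  exact quadratic_form_pow_add_integral_nonneg hx.le
    ((hΦsmooth.continuous_iteratedDeriv' (N + 1)).intervalIntegrable 0 x)
    (fun t ht => hΦnonneg t ht.1 (N + 1)) p Fin.val

/-- Under the nonnegativity assumption on all derivatives of `Φ_N` on
`(0, ∞)`, for every `x > 0`, every `k` with `2k+1 ≤ N` and every `p ∈ ℝ^{k+1}`,
`Σ_{i,j=0}^{k} p_i p_j b_{i+j+1}(x) ≥ 0`. -/
theorem hankel_shifted_quadratic_form_nonneg
    (N : ℕ) (hN : 0 < N) (hNodd : Odd N)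
    (l : Fin (N + 1) → ℝ) (hl : Function.Injective l) (hlpos : ∀ j, 0 < l j)
    (Φ : ℝ → ℝ)
    (hΦmem : Φ ∈ Submodule.span ℝ
        (Set.range (fun j : Fin (N + 1) => fun x : ℝ => Real.exp (l j * x))))
    (hΦ0 : ∀ j < N, iteratedDeriv j Φ 0 = 0)
    (hΦN : iteratedDeriv N Φ 0 = 1)
    (hΦnonneg : ∀ x : ℝ, 0 < x → ∀ j : ℕ, 0 ≤ iteratedDeriv j Φ x)
    (b : ℕ → ℝ → ℝ)
    (hb : ∀ j ≤ N, b j = fun x => (Nat.factorial j : ℝ) * iteratedDeriv (N - j) Φ x) :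
    ∀ x : ℝ, 0 < x → ∀ k : ℕ, 2 * k + 1 ≤ N → ∀ p : Fin (k + 1) → ℝ,
      0 ≤ ∑ i : Fin (k + 1), ∑ j : Fin (k + 1), p i * p j * b ((i : ℕ) + (j : ℕ) + 1) x :=
  hankel_shifted_quadratic_form_nonneg_general N l Φ hΦmem hΦ0 hΦN hΦnonneg b hb
end

section
/- Let S ≥ 1 and k ≥ 0 be integers. Then the (k+1)×(k+1) Hankel matrix with (i,j)-entry (i+j)! / (S+i+j+1)!, for 0 ≤ i,j ≤ k, is positive definite. -/
/-!
By the Beta integral, `(i+j)! / (S+i+j+1)! = (1/S!) ∫₀¹ x^(i+j) (1-x)^S dx`, so the matrix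
is `1/S!` times the Hankel moment matrix of the weight `(1-x)^S` on `[0,1]`. Its quadratic form
at `p` is `∫₀¹ P(x)² (1-x)^S dx` with `P = ∑ pᵢ xⁱ`, which is positive because a nonzero
`P` vanishes only at finitely many points.
-/

open Nat Polynomial intervalIntegral MeasureTheory Set Matrix

theorem integral_pow_mul_one_sub_pow (m n : ℕ) :
    ∫ x in (0 : ℝ)..1, x ^ m * (1 - x) ^ n = m ! * n ! / (m + n + 1)! := by
  have hbeta := Complex.betaIntegral_eq_Gamma_mul_div (m + 1) (n + 1)
    (by norm_cast; positivity) (by norm_cast; positivity)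
  rw [show (m + 1 + (n + 1) : ℂ) = ((m + n + 1 : ℕ) : ℂ) + 1 by push_cast; ring,
    Complex.Gamma_nat_eq_factorial, Complex.Gamma_nat_eq_factorial,
    Complex.Gamma_nat_eq_factorial, Complex.betaIntegral] at hbeta
  simp only [add_sub_cancel_right, Complex.cpow_natCast] at hbeta
  apply Complex.ofReal_injective
  rw [← integral_ofReal]
  push_cast
  exact hbeta

noncomputable def hankelMomentMatrix (w : ℝ → ℝ) (a b : ℝ) (n : ℕ) :
    Matrix (Fin n) (Fin n) ℝ :=
  Matrix.of fun i j => ∫ x in a..b, x ^ (i + j : ℕ) * w x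

section HankelMoment

variable {w : ℝ → ℝ} {a b : ℝ}

theorem dotProduct_hankelMomentMatrix_mulVec (hw : IntervalIntegrable w volume a b) {n : ℕ}
    (p : Fin n → ℝ) :
    p ⬝ᵥ (hankelMomentMatrix w a b n *ᵥ p) = ∫ x in a..b, (ofFn n p).eval x ^ 2 * w x := by
  have hint (i j : Fin n) :
      IntervalIntegrable (fun x => p i * p j * (x ^ (i + j : ℕ) * w x)) volume a b :=
    (hw.continuousOn_mul (continuous_pow _).continuousOn).const_mul _
  have hsq (x : ℝ) :
      (ofFn n p).eval x ^ 2 * w x = ∑ i, ∑ j, p i * p j * (x ^ (i + j : ℕ) * w x) := by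
    rw [ofFn_eq_sum_monomial, eval_finsetSum, sq, Finset.sum_mul_sum, Finset.sum_mul]
    simp only [eval_monomial, Finset.sum_mul]
    exact Finset.sum_congr rfl fun i _ => Finset.sum_congr rfl fun j _ => by ring
  simp_rw [hsq]
  rw [integral_finsetSum fun i _ => by
    simpa only [Finset.sum_fn] using IntervalIntegrable.sum Finset.univ fun j _ => hint i j]
  simp_rw [integral_finsetSum fun j _ => hint _ j, intervalIntegral.integral_const_mul]
  simp only [hankelMomentMatrix, dotProduct, Matrix.mulVec, Finset.mul_sum, of_apply]
  exact Finset.sum_congr rfl fun i _ => Finset.sum_congr rfl fun j _ => by ring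

theorem integral_sq_eval_mul_pos (hab : a < b) (hw : IntervalIntegrable w volume a b)
    (hpos : ∀ x ∈ Ioo a b, 0 < w x) {P : ℝ[X]} (hP : P ≠ 0) :
    0 < ∫ x in a..b, P.eval x ^ 2 * w x := by
  have hnonneg : 0 ≤ᵐ[volume.restrict (uIoc a b)] fun x => P.eval x ^ 2 * w x := by
    rw [Filter.EventuallyLE, uIoc_of_le hab.le]
    refine ae_restrict_of_ae_eq_of_ae_restrict Ioo_ae_eq_Ioc ?_
    rw [ae_restrict_iff' measurableSet_Ioo]
    filter_upwards with x hx using mul_nonneg (sq_nonneg _) (hpos x hx).le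
  have hsupp : Ioo a b \ {x | P.IsRoot x} ⊆
      Function.support (fun x => P.eval x ^ 2 * w x) ∩ Ioc a b :=
    fun x ⟨hx, hroot⟩ =>
      ⟨mul_ne_zero (pow_ne_zero 2 hroot) (hpos x hx).ne', Ioo_subset_Ioc_self hx⟩
  rw [integral_pos_iff_support_of_nonneg_ae' hnonneg
    (hw.continuousOn_mul (show Continuous fun x => P.eval x ^ 2 by fun_prop).continuousOn)]
  refine ⟨hab, ?_⟩
  calc 0 < volume (Ioo a b) := (Measure.measure_Ioo_pos _).mpr hab
    _ = volume (Ioo a b \ {x | P.IsRoot x}) :=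
      (measure_sdiff_null ((finite_setOfPred_isRoot hP).measure_zero _)).symm
    _ ≤ _ := measure_mono hsupp

theorem posDef_hankelMomentMatrix (hab : a < b) (hw : IntervalIntegrable w volume a b)
    (hpos : ∀ x ∈ Ioo a b, 0 < w x) (n : ℕ) : (hankelMomentMatrix w a b n).PosDef := by
  refine posDef_iff_dotProduct_mulVec.mpr ⟨?_, fun p hp => ?_⟩
  · ext i j
    simp only [hankelMomentMatrix, conjTranspose_apply, of_apply, star_trivial, add_comm]
  · rw [star_trivial, dotProduct_hankelMomentMatrix_mulVec hw]
    exact integral_sq_eval_mul_pos hab hw hpos ((injective_ofFn n).ne hp |>.trans_eq (map_zero _))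

end HankelMoment

theorem hankel_factorial_ratio_shifted_denominator_posDef_general (S k : ℕ) :
    (Matrix.of (fun i j : Fin (k + 1) =>
        (Nat.factorial ((i : ℕ) + (j : ℕ)) : ℝ) /
          (Nat.factorial (S + (i : ℕ) + (j : ℕ) + 1) : ℝ))).PosDef := by
  have hmatrix : Matrix.of (fun i j : Fin (k + 1) =>
        (Nat.factorial ((i : ℕ) + (j : ℕ)) : ℝ) /
          (Nat.factorial (S + (i : ℕ) + (j : ℕ) + 1) : ℝ)) =
      (S ! : ℝ)⁻¹ • hankelMomentMatrix (fun x => (1 - x) ^ S) 0 1 (k + 1) := by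
    ext i j
    rw [Matrix.smul_apply, hankelMomentMatrix, of_apply, of_apply, integral_pow_mul_one_sub_pow,
      show S + i + j + 1 = i + j + S + 1 by ring, smul_eq_mul]
    field_simp
  rw [hmatrix]
  have hw : IntervalIntegrable (fun x : ℝ => (1 - x) ^ S) volume 0 1 :=
    (by fun_prop : Continuous fun x : ℝ => (1 - x) ^ S).intervalIntegrable 0 1
  have hpos (x : ℝ) (hx : x ∈ Ioo 0 1) : 0 < (1 - x) ^ S := pow_pos (sub_pos.mpr hx.2) S
  exact (posDef_hankelMomentMatrix zero_lt_one hw hpos (k + 1)).smul (by positivity)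

/-- for integers `S ≥ 1` and `k ≥ 0`, the Hankel matrix with entries
`(i+j)! / (S+i+j+1)!` is positive definite. -/
theorem hankel_factorial_ratio_shifted_denominator_posDef (S k : ℕ) (hS : 1 ≤ S) :
    (Matrix.of (fun i j : Fin (k + 1) =>
        (Nat.factorial ((i : ℕ) + (j : ℕ)) : ℝ) /
          (Nat.factorial (S + (i : ℕ) + (j : ℕ) + 1) : ℝ))).PosDef :=
  hankel_factorial_ratio_shifted_denominator_posDef_general S k
end
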